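/- arXiv:2304.01579 — 3 statements merged into one kernel-verified Lean document; each statement's English description precedes it below -/
import Mathlib

section
/- For integers m ≥ 0, n ≥ 1 and any parameter μ ∈ ℝ, the generalised Laguerre polynomial T_{m,n}^{(μ)}(z) = det[(d/dz)^{j+k} L_{m+n}^{(μ+1)}(z)]_{j,k=0}^{n−1} equals (−1)^{n(n−1)/2} · Wr(L_{m+n}^{(n+μ)}, L_{m+n−1}^{(n+μ)}, …, L_{m+1}^{(n+μ)})(z), and also equals Wr(L_{m+1}^{(n+μ)}, L_{m+2}^{(n+μ)}, …, L_{m+n}^{(n+μ)})(z). -/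
noncomputable section

open Finset

/-- Generalized binomial coefficient `C(x, k)` for real `x`. -/
def genBinom (x : ℝ) (k : ℕ) : ℝ :=
  (∏ i ∈ Finset.range k, (x - i)) / (Nat.factorial k)

/-- Associated Laguerre polynomial `L_n^{(α)}(z)`, with the convention `L_n^{(α)} = 0` for `n < 0`. -/
def lagL (n : ℤ) (α : ℝ) : ℝ → ℝ := fun z =>
  if n < 0 then 0
  else ∑ k ∈ Finset.range (n.toNat + 1),
    (-1 : ℝ) ^ k * genBinom ((n : ℝ) + α) (n.toNat - k) * z ^ k / (Nat.factorial k)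

/-- Generalised Laguerre polynomial
`T_{m,n}^{(μ)}(z) = det[(d/dz)^{j+k} L_{m+n}^{(μ+1)}(z)]_{j,k=0}^{n-1}`
(with `T_{m,0}^{(μ)} = 1`, the empty determinant). -/
def genLag (m : ℤ) (n : ℕ) (μ : ℝ) : ℝ → ℝ := fun z =>
  Matrix.det (Matrix.of fun j k : Fin n =>
    iteratedDeriv ((j : ℕ) + (k : ℕ)) (lagL (m + n) (μ + 1)) z)

/-- Wronskian `Wr(f_1, …, f_r)(z) = det[(d/dz)^{j-1} f_k(z)]`. -/
def wronskian {r : ℕ} (f : Fin r → ℝ → ℝ) : ℝ → ℝ := fun z =>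
  Matrix.det (Matrix.of fun j k : Fin r => iteratedDeriv (j : ℕ) (f k) z)

/-- The constant `c_{m,n} = (-1)^{n(2m+1+n)/2} ∏_{j=1}^n (j-1)!/(m+j)!`. -/
def cmn (m n : ℕ) : ℝ :=
  (-1 : ℝ) ^ (n * (2 * m + 1 + n) / 2) *
    ∏ j ∈ Finset.range n, (Nat.factorial j : ℝ) / (Nat.factorial (m + j + 1))

/-- `τ_{m,n}^{(μ)}(z) = det[(z d/dz)^{j+k} L_{m+n}^{(n+μ)}(z)]_{j,k=0}^{n-1}`. -/
def tauP (m : ℤ) (n : ℕ) (μ : ℝ) : ℝ → ℝ := fun z =>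
  Matrix.det (Matrix.of fun j k : Fin n =>
    ((fun (g : ℝ → ℝ) => fun t => t * deriv g t)^[(j : ℕ) + (k : ℕ)]
      (lagL (m + n) ((n : ℝ) + μ))) z)

/-- Hirota bilinear operator `D_z(f • g) = f' g - f g'`. -/
def hirota (f g : ℝ → ℝ) (z : ℝ) : ℝ := deriv f z * g z - f z * deriv g z

/-- Probabilists' Hermite polynomial `He_n` as a real function. -/
def He (n : ℕ) : ℝ → ℝ := fun z => Polynomial.aeval z (Polynomial.hermite n)

/-- The fifth Painlevé equation (with `δ = -1/2`) for `w` with parameters `(a, b, c)`,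
holding at the point `z`. -/
def PV (a b c : ℝ) (w : ℝ → ℝ) (z : ℝ) : Prop :=
  iteratedDeriv 2 w z =
    (1 / (2 * w z) + 1 / (w z - 1)) * (deriv w z) ^ 2
      - (1 / z) * deriv w z
      + (w z - 1) ^ 2 * (a * (w z) ^ 2 + b) / (z ^ 2 * w z)
      + c * w z / z
      - w z * (w z + 1) / (2 * (w z - 1))

/-- The Jimbo–Miwa–Okamoto `σ`-equation `S_V` with parameters `(ν₁, ν₂, ν₃)`,
holding at the point `z`. -/
def SV (ν₁ ν₂ ν₃ : ℝ) (σ : ℝ → ℝ) (z : ℝ) : Prop :=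
  (z * iteratedDeriv 2 σ z) ^ 2 =
    (2 * (deriv σ z) ^ 2 + (ν₁ + ν₂ + ν₃ - z) * deriv σ z + σ z) ^ 2
      - 4 * deriv σ z * (deriv σ z + ν₁) * (deriv σ z + ν₂) * (deriv σ z + ν₃)

/-!
Since `(L_n^{(α)})' = -L_{n-1}^{(α+1)}`, all three determinants are, after pulling the signs
`(-1)^j` out of the rows (and `(-1)^k` out of the columns for `T`), determinants of Laguerre
values with shifted degree and parameter. The contiguous relation
`L_n^{(α+1)} = L_{n-1}^{(α+1)} + L_n^{(α)}` and Newton's forward-difference formula give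
`L_{M+k-j}^{(γ+j)} = ∑_i C(k,i) L_{M+i-j}^{(γ+j-i)}`, so the matrix of the second Wronskian is the
Toeplitz matrix `[L_{M+k-j}^{(γ+j-k)}]` times the unitriangular Pascal matrix `[C(k,i)]`. The
Hankel matrix of `T_{m,n}^{(μ)}` is this Toeplitz matrix with its columns reversed, and reversing
the order of the functions turns one Wronskian into the other; each reversal costs the sign
`(-1)^{n(n-1)/2}`.
-/

open Equiv Matrix
open scoped Nat fwdDiff

lemma genBinom_succ_succ (x : ℝ) (k : ℕ) :
    genBinom (x + 1) (k + 1) = genBinom x k + genBinom x (k + 1) := by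
  have hprod : ∏ i ∈ range (k + 1), (x + 1 - i) = (x + 1) * ∏ i ∈ range k, (x - i) := by
    rw [prod_range_succ']
    simp only [Nat.cast_succ, add_sub_add_right_eq_sub, Nat.cast_zero, sub_zero, mul_comm]
  simp only [genBinom, hprod, prod_range_succ, Nat.factorial_succ, Nat.cast_mul, Nat.cast_succ]
  field_simp
  ring

lemma lagL_of_neg {n : ℤ} (hn : n < 0) (α : ℝ) : lagL n α = 0 := by
  funext z
  simp [lagL, hn]

lemma lagL_natCast (N : ℕ) (α : ℝ) :
    lagL N α = fun z =>
      ∑ k ∈ range (N + 1), (-1) ^ k * genBinom (N + α) (N - k) * z ^ k / k ! := by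
  funext z
  simp [lagL]

lemma hasDerivAt_sum_mul_pow_div_factorial (a : ℕ → ℝ) (K : ℕ) (z : ℝ) :
    HasDerivAt (fun z => ∑ k ∈ range (K + 1), a k * z ^ k / k !)
      (∑ k ∈ range K, a (k + 1) * z ^ k / k !) z := by
  induction K with
  | zero => simpa using hasDerivAt_const z (a 0)
  | succ K ih =>
    have hterm : HasDerivAt (fun z => a (K + 1) * z ^ (K + 1) / (K + 1)!)
        (a (K + 1) * z ^ K / K !) z := by
      refine (((hasDerivAt_pow (K + 1) z).const_mul (a (K + 1))).div_const _).congr_deriv ?_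
      rw [Nat.factorial_succ, Nat.cast_mul]
      field_simp
      simp
    have hsum : (fun z => ∑ k ∈ range (K + 1 + 1), a k * z ^ k / k !)
        = fun z =>
          ∑ k ∈ range (K + 1), a k * z ^ k / k ! + a (K + 1) * z ^ (K + 1) / (K + 1)! :=
      funext fun z => sum_range_succ _ _
    rw [hsum, sum_range_succ]
    exact ih.add hterm

lemma hasDerivAt_lagL (n : ℤ) (α z : ℝ) :
    HasDerivAt (lagL n α) (-lagL (n - 1) (α + 1) z) z := by
  rcases lt_or_ge n 0 with hn | hn
  · rw [lagL_of_neg hn, lagL_of_neg (by omega)]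
    simp only [Pi.zero_apply, neg_zero]
    exact hasDerivAt_const z 0
  obtain ⟨N, rfl⟩ := Int.eq_ofNat_of_zero_le hn
  rw [lagL_natCast]
  refine (hasDerivAt_sum_mul_pow_div_factorial
    (fun k => (-1) ^ k * genBinom (N + α) (N - k)) N z).congr_deriv ?_
  rcases N with _ | N
  · simp [lagL_of_neg]
  · rw [show ((N + 1 : ℕ) : ℤ) - 1 = N by push_cast; ring, lagL_natCast, ← sum_neg_distrib]
    refine sum_congr rfl fun k _ => ?_
    rw [Nat.add_sub_add_right,
      show (N : ℝ) + (α + 1) = ((N + 1 : ℕ) : ℝ) + α by push_cast; ring]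
    ring

lemma iteratedDeriv_lagL (p : ℕ) (n : ℤ) (α z : ℝ) :
    iteratedDeriv p (lagL n α) z = (-1) ^ p * lagL (n - p) (α + p) z := by
  induction p generalizing n α with
  | zero => simp
  | succ p ih =>
    have hderiv : deriv (lagL n α) = -lagL (n - 1) (α + 1) :=
      funext fun z => (hasDerivAt_lagL n α z).deriv
    rw [iteratedDeriv_succ', hderiv, iteratedDeriv_neg, ih]
    push_cast
    ring_nf

lemma lagL_pascal (p : ℤ) (α z : ℝ) :
    lagL (p + 1) (α + 1) z = lagL p (α + 1) z + lagL (p + 1) α z := by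
  rcases lt_or_ge p 0 with hp | hp
  · rcases (by omega : p + 1 < 0 ∨ p = -1) with hp' | rfl
    · simp [lagL_of_neg hp', lagL_of_neg hp]
    · norm_num [lagL, genBinom]
  obtain ⟨N, rfl⟩ := Int.eq_ofNat_of_zero_le hp
  rw [show (N : ℤ) + 1 = ((N + 1 : ℕ) : ℤ) by push_cast; rfl]
  simp only [lagL_natCast]
  rw [sum_range_succ, sum_range_succ _ (N + 1), Nat.sub_self, genBinom, genBinom]
  have hx : ((N + 1 : ℕ) : ℝ) + (α + 1) = ((N : ℝ) + (α + 1)) + 1 := by push_cast; ring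
  have hx' : ((N + 1 : ℕ) : ℝ) + α = (N : ℝ) + (α + 1) := by push_cast; ring
  have hterm : ∀ k ∈ range (N + 1),
      (-1) ^ k * genBinom (((N : ℝ) + (α + 1)) + 1) (N + 1 - k) * z ^ k / k !
        = (-1) ^ k * genBinom ((N : ℝ) + (α + 1)) (N - k) * z ^ k / k !
          + (-1) ^ k * genBinom ((N : ℝ) + (α + 1)) (N + 1 - k) * z ^ k / k ! := by
    intro k hk
    rw [Nat.sub_add_comm (Nat.lt_succ_iff.mp (mem_range.mp hk)), genBinom_succ_succ]
    ring
  rw [hx, hx', sum_congr rfl hterm, sum_add_distrib]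
  simp only [range_zero, prod_empty, Nat.factorial_zero, Nat.cast_one, div_one, mul_one]
  ring

section Pascal

variable {R : Type*} [CommRing R]

def IsPascal (h : ℤ → ℝ → R) : Prop :=
  ∀ p γ, h (p + 1) (γ + 1) = h p (γ + 1) + h (p + 1) γ

variable {h : ℤ → ℝ → R}

lemma fwdDiff_iterate_of_pascal (hh : IsPascal h) (γ : ℝ) (k : ℕ) (p : ℤ) :
    (Δ_[1])^[k] (fun q => h q γ) p = h (p + k) (γ - k) := by
  induction k generalizing p with
  | zero => simp
  | succ k ih =>
    have key := hh (p + k) (γ - (k + 1))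
    rw [show γ - (k + 1) + 1 = γ - k by ring] at key
    rw [Function.iterate_succ_apply', fwdDiff, ih, ih, add_right_comm, key]
    push_cast
    ring_nf

lemma sum_choose_of_pascal (hh : IsPascal h) (p : ℤ) (γ : ℝ) (k : ℕ) :
    h (p + k) γ = ∑ i ∈ range (k + 1), (k.choose i : R) * h (p + i) (γ - i) := by
  simpa [fwdDiff_iterate_of_pascal hh, nsmul_eq_mul] using
    shift_eq_sum_fwdDiff_iter 1 (fun q => h q γ) k p

lemma det_toeplitz_of_pascal (hh : IsPascal h) (M : ℤ) (γ : ℝ) (n : ℕ) :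
    (of fun j k : Fin n => h (M + k - j) (γ + j)).det
      = (of fun j k : Fin n => h (M + k - j) (γ + j - k)).det := by
  set P : Matrix (Fin n) (Fin n) R := of fun i k => ((k : ℕ).choose i : R)
  have hP : P.det = 1 := by
    rw [det_of_isUpperTriangular]
    · simp [P]
    · intro i k hki
      simp [P, Nat.choose_eq_zero_of_lt (show (k : ℕ) < i from hki)]
  suffices (of fun j k : Fin n => h (M + k - j) (γ + j))
      = (of fun j k : Fin n => h (M + k - j) (γ + j - k)) * P by
    rw [this, det_mul, hP, mul_one]
  ext j k
  simp only [mul_apply, of_apply, P]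
  rw [Fin.sum_univ_eq_sum_range
      (fun i => h (M + i - j) (γ + j - i) * ((k : ℕ).choose i : R)),
    ← sum_subset (range_subset_range.2 k.2) fun i _ hi => ?_,
    show M + k - j = M - j + k by ring, sum_choose_of_pascal hh]
  · refine sum_congr rfl fun i _ => ?_
    rw [mul_comm, show M - j + i = M + i - j by ring, add_sub_right_comm]
  · rw [Nat.choose_eq_zero_of_lt (by simpa using hi), Nat.cast_zero, mul_zero]

end Pascal

lemma sign_revPerm (n : ℕ) :
    Perm.sign (Fin.revPerm : Perm (Fin n)) = (-1) ^ (n * (n - 1) / 2) := by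
  rw [← sum_range_id]
  induction n with
  | zero => rfl
  | succ n ih =>
    have hrev : finRotate (n + 1) * Fin.revPerm = Perm.decomposeFin.symm (0, Fin.revPerm) := by
      ext i : 1
      refine Fin.cases ?_ (fun i => ?_) i
      · simp
      · simp [Fin.rev_succ, Fin.coeSucc_eq_succ]
    have hsign := congrArg Perm.sign hrev
    rw [map_mul, sign_finRotate, Perm.decomposeFin.symm_sign, ih, if_pos rfl, one_mul,
      Nat.succ_sub_one] at hsign
    rw [sum_range_succ, pow_add, ← hsign, mul_right_comm, Int.units_mul_self, one_mul]

lemma wronskian_comp_perm {r : ℕ} (f : Fin r → ℝ → ℝ) (σ : Perm (Fin r)) (z : ℝ) :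
    wronskian (fun k => f (σ k)) z = Perm.sign σ * wronskian f z :=
  det_permute' σ (of fun j k => iteratedDeriv j (f k) z)

lemma prod_neg_one_pow_val (n : ℕ) :
    ∏ i : Fin n, (-1 : ℝ) ^ (i : ℕ) = (-1) ^ (n * (n - 1) / 2) := by
  rw [prod_pow_eq_pow_sum, Fin.sum_univ_eq_sum_range (fun i => i), sum_range_id]

lemma wronskian_lagL {n : ℕ} (f : Fin n → ℤ) (α z : ℝ) :
    wronskian (fun k => lagL (f k) α) z
      = (-1) ^ (n * (n - 1) / 2) * (of fun j k : Fin n => lagL (f k - j) (α + j) z).det := by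
  rw [← prod_neg_one_pow_val, ← det_mul_column]
  simp only [wronskian, iteratedDeriv_lagL]
  rfl

lemma det_neg_one_pow_mul_mul {R : Type*} [CommRing R] {n : ℕ} (M : Matrix (Fin n) (Fin n) R) :
    (of fun i j : Fin n => (-1) ^ (i : ℕ) * ((-1) ^ (j : ℕ) * M i j)).det = M.det :=
  calc _ = (∏ i : Fin n, (-1 : R) ^ (i : ℕ))
          * (of fun i j : Fin n => (-1) ^ (j : ℕ) * M i j).det :=
        det_mul_column _ _
    _ = (∏ i : Fin n, (-1 : R) ^ (i : ℕ)) * ((∏ i : Fin n, (-1 : R) ^ (i : ℕ)) * M.det) :=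
        congrArg _ (det_mul_row _ _)
    _ = M.det := by
        rw [← mul_assoc, ← prod_mul_distrib]
        simp [← mul_pow]

lemma genLag_eq_det (m : ℤ) (n : ℕ) (μ z : ℝ) :
    genLag m n μ z
      = (of fun j k : Fin n => lagL (m + n - (j + k : ℕ)) (μ + 1 + (j + k : ℕ)) z).det := by
  rw [← det_neg_one_pow_mul_mul]
  simp only [genLag, iteratedDeriv_lagL, pow_add, mul_assoc, of_apply]

lemma genLag_eq_neg_one_pow_mul_det (m : ℤ) (n : ℕ) (μ z : ℝ) :
    genLag m n μ z = (-1) ^ (n * (n - 1) / 2)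
      * (of fun j k : Fin n => lagL (m + 1 + k - j) (n + μ + j - k) z).det := by
  have hrev : (of fun j k : Fin n => lagL (m + 1 + k - j) (n + μ + j - k) z)
      = (of fun j k : Fin n => lagL (m + n - (j + k : ℕ)) (μ + 1 + (j + k : ℕ)) z).submatrix
          id Fin.revPerm := by
    ext j k
    have hk : (Fin.rev k : ℕ) + k + 1 = n := by rw [Fin.val_rev]; omega
    have hk' : ((Fin.rev k : ℕ) : ℝ) + k + 1 = n := by exact_mod_cast hk
    simp only [of_apply, submatrix_apply, id, Fin.revPerm_apply]
    congr 1
    · omega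
    · push_cast
      linarith
  rw [hrev, det_permute', sign_revPerm, genLag_eq_det, ← mul_assoc]
  push_cast
  rw [← mul_pow, neg_one_mul, neg_neg, one_pow, one_mul]

lemma wronskian_lagL_add_eq_neg_one_pow_mul_det (m : ℤ) (n : ℕ) (α z : ℝ) :
    wronskian (fun k : Fin n => lagL (m + k) α) z = (-1) ^ (n * (n - 1) / 2)
      * (of fun j k : Fin n => lagL (m + k - j) (α + j - k) z).det := by
  rw [wronskian_lagL]
  exact congrArg _ (det_toeplitz_of_pascal (h := fun p γ => lagL p γ z)
    (fun p γ => lagL_pascal p γ z) m α n)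

theorem genLag_eq_wronskian_general (m n : ℕ) (μ : ℝ) (z : ℝ) :
    genLag (m : ℤ) n μ z
        = (-1 : ℝ) ^ (n * (n - 1) / 2) *
            wronskian (fun k : Fin n => lagL ((m : ℤ) + n - (k : ℕ)) ((n : ℝ) + μ)) z
      ∧ genLag (m : ℤ) n μ z
        = wronskian (fun k : Fin n => lagL ((m : ℤ) + 1 + (k : ℕ)) ((n : ℝ) + μ)) z := by
  set s : ℝ := (-1) ^ (n * (n - 1) / 2)
  have hs : s * s = 1 := by rw [← mul_pow, neg_one_mul, neg_neg, one_pow]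
  have hT := genLag_eq_neg_one_pow_mul_det m n μ z
  have hW₂ := wronskian_lagL_add_eq_neg_one_pow_mul_det (m + 1) n (n + μ) z
  have hW₁ : wronskian (fun k : Fin n => lagL ((m : ℤ) + n - (k : ℕ)) ((n : ℝ) + μ)) z
      = s * wronskian (fun k : Fin n => lagL ((m : ℤ) + 1 + (k : ℕ)) ((n : ℝ) + μ)) z := by
    rw [show s = Perm.sign (Fin.revPerm : Perm (Fin n)) by simp [sign_revPerm, s],
      ← wronskian_comp_perm]
    congr! 3 with k
    rw [Fin.revPerm_apply, Fin.val_rev]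
    omega
  refine ⟨?_, hT.trans hW₂.symm⟩
  rw [hW₁, hW₂, hT, ← mul_assoc, hs, one_mul]

/-- `T_{m,n}^{(μ)}` as Wronskians of associated Laguerre polynomials. -/
theorem genLag_eq_wronskian (m n : ℕ) (hn : 1 ≤ n) (μ : ℝ) (z : ℝ) :
    genLag (m : ℤ) n μ z
        = (-1 : ℝ) ^ (n * (n - 1) / 2) *
            wronskian (fun k : Fin n => lagL ((m : ℤ) + n - (k : ℕ)) ((n : ℝ) + μ)) z
      ∧ genLag (m : ℤ) n μ z
        = wronskian (fun k : Fin n => lagL ((m : ℤ) + 1 + (k : ℕ)) ((n : ℝ) + μ)) z :=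
  genLag_eq_wronskian_general m n μ z
end
end

section
/- For integers m ≥ 1, n ≥ 1 and any parameter μ ∈ ℝ, the generalised Laguerre polynomial satisfies the Toda-type differential-difference equation T_{m,n}^{(μ)}(z) · (d²/dz²)T_{m,n}^{(μ)}(z) − ((d/dz)T_{m,n}^{(μ)}(z))² = T_{m+1,n−1}^{(μ)}(z) · T_{m−1,n+1}^{(μ)}(z). -/
noncomputable section

open Finset

/-
The determinant `T_{m,n}` is the `n × n` Hankel determinant `τ_n` of the derivatives of
`f = L_{m+n}^{(μ+1)}`, and `T_{m+1,n-1}`, `T_{m-1,n+1}` are `τ_{n-1}`, `τ_{n+1}` for the same `f`.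
Differentiating a Hankel determinant column by column, every shifted column except the last one
repeats its right neighbour, so `τ_n'` and `τ_n''` are minors of the `(n+1) × (n+1)` Hankel matrix
obtained by deleting one of its last two rows and one of its last two columns. The Toda equation
is then the Desnanot–Jacobi identity for that matrix, an instance of Jacobi's theorem on the
minors of the adjugate.
-/

open Matrix
open scoped ContDiff

namespace Matrix

variable {R : Type*} [CommRing R]

section Blocks

variable {n m : Type*} [Fintype n] [Fintype m] [DecidableEq n] [DecidableEq m]

theorem det_mul_det_adjugate_toBlocks₂₂ (A : Matrix (n ⊕ m) (n ⊕ m) R) :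
    A.det * (adjugate A).toBlocks₂₂.det = A.det ^ Fintype.card m * A.toBlocks₁₁.det := by
  have h : fromBlocks A.toBlocks₁₁ A.toBlocks₁₂ A.toBlocks₂₁ A.toBlocks₂₂ *
      fromBlocks (adjugate A).toBlocks₁₁ (adjugate A).toBlocks₁₂ (adjugate A).toBlocks₂₁
        (adjugate A).toBlocks₂₂ = A.det • fromBlocks 1 0 0 1 := by
    rw [fromBlocks_toBlocks, fromBlocks_toBlocks, fromBlocks_one, mul_adjugate]
  rw [fromBlocks_multiply, fromBlocks_smul, fromBlocks_inj] at h
  obtain ⟨-, h₁₂, -, h₂₂⟩ := h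
  have hprod : A * fromBlocks 1 (adjugate A).toBlocks₁₂ 0 (adjugate A).toBlocks₂₂ =
      fromBlocks A.toBlocks₁₁ 0 A.toBlocks₂₁ (A.det • 1) := by
    nth_rw 1 [← fromBlocks_toBlocks A]
    rw [fromBlocks_multiply, h₁₂, h₂₂]
    simp
  have := congrArg det hprod
  rw [det_mul, det_fromBlocks_zero₂₁, det_fromBlocks_zero₁₂, det_smul, det_one, det_one,
    one_mul, mul_one] at this
  rw [this, mul_comm]

theorem det_adjugate_toBlocks₂₂ [Nonempty m] (A : Matrix (n ⊕ m) (n ⊕ m) R) :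
    (adjugate A).toBlocks₂₂.det = A.det ^ (Fintype.card m - 1) * A.toBlocks₁₁.det := by
  let X := mvPolynomialX (n ⊕ m) (n ⊕ m) ℤ
  suffices (adjugate X).toBlocks₂₂.det = X.det ^ (Fintype.card m - 1) * X.toBlocks₁₁.det by
    rw [← mvPolynomialX_mapMatrix_aeval ℤ A, ← AlgHom.map_adjugate]
    have h := congrArg (MvPolynomial.aeval fun p => A p.1 p.2) this
    rw [map_mul, map_pow, AlgHom.map_det, AlgHom.map_det, AlgHom.map_det] at h
    exact h
  refine mul_left_cancel₀ (det_mvPolynomialX_ne_zero (n ⊕ m) ℤ) ?_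
  rw [det_mul_det_adjugate_toBlocks₂₂, ← mul_assoc, ← pow_succ',
    Nat.sub_add_cancel Fintype.card_pos]

end Blocks

theorem desnanot_jacobi {t : ℕ} (A : Matrix (Fin (t + 2)) (Fin (t + 2)) R) :
    A.det * (A.submatrix (Fin.castAdd 2) (Fin.castAdd 2)).det =
      (A.submatrix (Fin.last t).castSucc.succAbove (Fin.last t).castSucc.succAbove).det *
          (A.submatrix (Fin.last (t + 1)).succAbove (Fin.last (t + 1)).succAbove).det -
        (A.submatrix (Fin.last t).castSucc.succAbove (Fin.last (t + 1)).succAbove).det *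
          (A.submatrix (Fin.last (t + 1)).succAbove (Fin.last t).castSucc.succAbove).det := by
  have h := det_adjugate_toBlocks₂₂ (A.submatrix finSumFinEquiv finSumFinEquiv)
  rw [det_submatrix_equiv_self, adjugate_submatrix_equiv_self, det_fin_two] at h
  have h₁₁ : (A.submatrix finSumFinEquiv finSumFinEquiv).toBlocks₁₁ =
      A.submatrix (Fin.castAdd 2) (Fin.castAdd 2) := rfl
  have h0 : finSumFinEquiv (Sum.inr 0 : Fin t ⊕ Fin 2) = (Fin.last t).castSucc := rfl
  have h1 : finSumFinEquiv (Sum.inr 1 : Fin t ⊕ Fin 2) = Fin.last (t + 1) := rfl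
  simp only [toBlocks₂₂, of_apply, submatrix_apply, h0, h1, adjugate_fin_succ_eq_det_submatrix,
    h₁₁] at h
  have hodd : (-1 : R) ^ (t + 1 + t) = -1 := Odd.neg_one_pow ⟨t, by ring⟩
  simp only [Fin.val_last, Fin.val_castSucc, Even.neg_one_pow (⟨_, rfl⟩ : Even (t + t)),
    Even.neg_one_pow (⟨_, rfl⟩ : Even (t + 1 + (t + 1))), hodd, add_comm t (t + 1),
    Fintype.card_fin] at h
  linear_combination -h

end Matrix

theorem hasDerivAt_det {𝕜 : Type*} [NontriviallyNormedField 𝕜] {n : Type*} [Fintype n]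
    [DecidableEq n] {M : 𝕜 → Matrix n n 𝕜} {M' : Matrix n n 𝕜} {x : 𝕜}
    (hM : ∀ i j, HasDerivAt (fun y => M y i j) (M' i j) x) :
    HasDerivAt (fun y => (M y).det) (∑ j, (updateCol (M x) j fun i => M' i j).det) x := by
  simp only [det_apply, Units.smul_def, zsmul_eq_mul]
  have hterm : ∀ σ : Equiv.Perm n, HasDerivAt (fun y => ((σ.sign : ℤ) : 𝕜) * ∏ i, M y (σ i) i)
      (((σ.sign : ℤ) : 𝕜) * ∑ j, (∏ i ∈ univ.erase j, M x (σ i) i) * M' (σ j) j) x := fun σ =>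
    (HasDerivAt.fun_finsetProd fun i _ => hM (σ i) i).const_mul _
  refine (HasDerivAt.fun_sum fun σ _ => hterm σ).congr_deriv ?_
  simp only [mul_sum]
  rw [sum_comm]
  refine sum_congr rfl fun j _ => sum_congr rfl fun σ _ => ?_
  rw [← prod_erase_mul univ _ (mem_univ j), updateCol_self]
  congr 2
  refine prod_congr rfl fun i hi => ?_
  rw [updateCol_ne (ne_of_mem_erase hi)]

variable {𝕜 : Type*} [NontriviallyNormedField 𝕜] {f : 𝕜 → 𝕜}

def derivHankel (f : 𝕜 → 𝕜) (x : 𝕜) : Matrix ℕ ℕ 𝕜 :=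
  of fun j k => iteratedDeriv (j + k) f x

def hankelDet (f : 𝕜 → 𝕜) (N : ℕ) (x : 𝕜) : 𝕜 :=
  ((derivHankel f x).submatrix (Fin.val : Fin N → ℕ) Fin.val).det

theorem derivHankel_transpose (x : 𝕜) : (derivHankel f x)ᵀ = derivHankel f x := by
  ext j k
  simp only [derivHankel, transpose_apply, of_apply, add_comm]

theorem det_derivHankel_submatrix_comm {N : ℕ} (x : 𝕜) (r c : Fin N → ℕ) :
    ((derivHankel f x).submatrix r c).det = ((derivHankel f x).submatrix c r).det := by
  rw [← det_transpose, transpose_submatrix, derivHankel_transpose]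

theorem hasDerivAt_det_derivHankel_submatrix (hf : ContDiff 𝕜 ∞ f) {N : ℕ} (r c : Fin N → ℕ)
    (x : 𝕜) :
    HasDerivAt (fun y => ((derivHankel f y).submatrix r c).det)
      (∑ k, ((derivHankel f x).submatrix r (Function.update c k (c k + 1))).det) x := by
  have hentry : ∀ n, HasDerivAt (iteratedDeriv n f) (iteratedDeriv (n + 1) f x) x := fun n => by
    rw [iteratedDeriv_succ]
    exact ((hf.differentiable_iteratedDeriv n (mod_cast ENat.natCast_lt_top n)) x).hasDerivAt
  refine (hasDerivAt_det (M := fun y => (derivHankel f y).submatrix r c)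
    (M' := of fun i j => iteratedDeriv (r i + c j + 1) f x) fun i j => hentry _).congr_deriv
    (sum_congr rfl fun k _ => congrArg det ?_)
  ext i j
  rw [updateCol_apply]
  simp only [submatrix_apply, Function.update_apply, derivHankel, of_apply]
  split_ifs
  · rw [add_assoc]
  · rfl

theorem hasDerivAt_det_derivHankel_submatrix_val (hf : ContDiff 𝕜 ∞ f) {t : ℕ}
    (r : Fin (t + 1) → ℕ) (x : 𝕜) :
    HasDerivAt (fun y => ((derivHankel f y).submatrix r Fin.val).det)
      ((derivHankel f x).submatrix r (Fin.val ∘ (Fin.last t).castSucc.succAbove)).det x := by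
  refine (hasDerivAt_det_derivHankel_submatrix hf r Fin.val x).congr_deriv ?_
  rw [sum_eq_single (Fin.last t)]
  · congr 2
    funext j
    rcases Fin.eq_castSucc_or_eq_last j with ⟨j, rfl⟩ | rfl
    · simp [Fin.succAbove_of_castSucc_lt _ _ (Fin.castSucc_lt_castSucc_iff.2 j.castSucc_lt_last),
        (Fin.castSucc_lt_last j).ne]
    · simp [Fin.succAbove_of_le_castSucc]
  · intro k _ hk
    obtain ⟨k, rfl⟩ := Fin.exists_castSucc_eq.2 hk
    refine det_zero_of_column_eq (Fin.castSucc_lt_succ (i := k)).ne fun i => ?_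
    simp [(Fin.castSucc_lt_succ (i := k)).ne']
  · simp

theorem hankelDet_toda (hf : ContDiff 𝕜 ∞ f) (t : ℕ) (x : 𝕜) :
    hankelDet f (t + 1) x * iteratedDeriv 2 (hankelDet f (t + 1)) x
        - deriv (hankelDet f (t + 1)) x ^ 2 = hankelDet f t x * hankelDet f (t + 2) x := by
  have hDJ := desnanot_jacobi ((derivHankel f x).submatrix (Fin.val : Fin (t + 2) → ℕ) Fin.val)
  have hlast : (Fin.val ∘ (Fin.last (t + 1)).succAbove : Fin (t + 1) → ℕ) = Fin.val := by
    funext j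
    simp [Fin.succAbove_last]
  have hcastAdd : (Fin.val ∘ Fin.castAdd 2 : Fin t → ℕ) = Fin.val := rfl
  simp only [submatrix_submatrix, hlast, hcastAdd] at hDJ
  set s : Fin (t + 1) → ℕ := Fin.val ∘ (Fin.last t).castSucc.succAbove
  have hderiv :
      deriv (hankelDet f (t + 1)) = fun y => ((derivHankel f y).submatrix Fin.val s).det :=
    funext fun y => (hasDerivAt_det_derivHankel_submatrix_val hf Fin.val y).deriv
  have hderiv2 :
      iteratedDeriv 2 (hankelDet f (t + 1)) x = ((derivHankel f x).submatrix s s).det := by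
    rw [iteratedDeriv_succ, iteratedDeriv_one, hderiv]
    simp_rw [det_derivHankel_submatrix_comm _ Fin.val s]
    exact (hasDerivAt_det_derivHankel_submatrix_val hf s x).deriv
  rw [det_derivHankel_submatrix_comm x s Fin.val] at hDJ
  rw [hderiv2, hderiv]
  unfold hankelDet
  linear_combination -hDJ

theorem contDiff_lagL (n : ℤ) (α : ℝ) : ContDiff ℝ ∞ (lagL n α) := by
  unfold lagL
  split_ifs
  · exact contDiff_const
  · exact ContDiff.sum fun k _ => (contDiff_const.mul (contDiff_id.pow k)).div_const _

theorem genLag_eq_hankelDet (k : ℤ) (N : ℕ) (μ : ℝ) :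
    genLag k N μ = hankelDet (lagL (k + N) (μ + 1)) N :=
  rfl

theorem genLag_toda_general (m n : ℕ) (hn : 1 ≤ n) (μ : ℝ) (z : ℝ) :
    genLag (m : ℤ) n μ z * iteratedDeriv 2 (genLag (m : ℤ) n μ) z
        - (deriv (genLag (m : ℤ) n μ) z) ^ 2
      = genLag ((m : ℤ) + 1) (n - 1) μ z * genLag ((m : ℤ) - 1) (n + 1) μ z := by
  obtain ⟨t, rfl⟩ : ∃ t, n = t + 1 := ⟨n - 1, by omega⟩
  have hplus : (m : ℤ) + 1 + (t : ℕ) = m + (t + 1 : ℕ) := by push_cast; ring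
  have hminus : (m : ℤ) - 1 + (t + 1 + 1 : ℕ) = m + (t + 1 : ℕ) := by push_cast; ring
  rw [Nat.add_sub_cancel]
  simp only [genLag_eq_hankelDet, hplus, hminus]
  exact hankelDet_toda (contDiff_lagL _ _) t z

/-- the Toda-type differential-difference equation. -/
theorem genLag_toda (m n : ℕ) (hm : 1 ≤ m) (hn : 1 ≤ n) (μ : ℝ) (z : ℝ) :
    genLag (m : ℤ) n μ z * iteratedDeriv 2 (genLag (m : ℤ) n μ) z
        - (deriv (genLag (m : ℤ) n μ) z) ^ 2
      = genLag ((m : ℤ) + 1) (n - 1) μ z * genLag ((m : ℤ) - 1) (n + 1) μ z :=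
  genLag_toda_general m n hn μ z
end
end

section
/- Let m ≥ 1 be an integer and μ ∈ ℝ. Then the rational function w_{m,0}(z; μ) = L_m^{(μ+1)}(z) / L_{m−1}^{(μ+1)}(z) is a solution of P_V with parameters α = m²/2, β = −(m+1+μ)²/2, γ = μ. -/
noncomputable section

open Finset

/-! For `α = μ + 1`, the ratio `w = L_{n+1}^{(α)} / L_n^{(α)}` satisfies the Riccati equation
`z w' = -(n+1) w² + (2(n+1) + α - z) w - (n+1+α)`, a consequence of the contiguity relations
`z (L_{n+1})' = (n+1) L_{n+1} - (n+1+α) L_n` and `(L_{n+1})' = L_n' - L_n`. Differentiating any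
Riccati equation `z w' = -k w² + (k + c - z) w - c` once more and eliminating `w'` gives `P_V` with
`(α, β, γ) = (k²/2, -c²/2, c - k - 1)`. -/

open scoped Nat
open Filter Topology

theorem pv_of_riccati {k c : ℝ} {w : ℝ → ℝ} {z : ℝ} (hz : z ≠ 0) (hw0 : w z ≠ 0)
    (hw1 : w z ≠ 1)
    (hric : ∀ᶠ t in 𝓝 z, HasDerivAt w ((-k * w t ^ 2 + (k + c - t) * w t - c) / t) t) :
    PV (k ^ 2 / 2) (-c ^ 2 / 2) (c - k - 1) w z := by
  set w' : ℝ → ℝ := fun t => (-k * w t ^ 2 + (k + c - t) * w t - c) / t with hw'_def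
  have hw' : HasDerivAt w (w' z) z := hric.self_of_nhds
  have hw'' : HasDerivAt w' (((-k * (2 * w z * w' z) + (-w z + (k + c - z) * w' z)) * z
      - (-k * w z ^ 2 + (k + c - z) * w z - c)) / z ^ 2) z := by
    refine (((((hw'.pow 2).const_mul (-k)).add
      (((hasDerivAt_id z).const_sub (k + c)).mul hw')).sub_const c).div
        (hasDerivAt_id z) hz).congr_deriv ?_
    simp only [id, Pi.add_apply, Pi.mul_apply, Pi.pow_apply]
    ring
  have h2 : iteratedDeriv 2 w z = deriv w' z := by
    rw [iteratedDeriv_succ, iteratedDeriv_one]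
    have hderiv : deriv w =ᶠ[𝓝 z] w' := hric.mono fun t ht => ht.deriv
    exact hderiv.deriv_eq
  unfold PV
  rw [h2, hw''.deriv, hw'.deriv, hw'_def]
  field_simp [sub_ne_zero.mpr hw1]
  ring

theorem genBinom_zero (x : ℝ) : genBinom x 0 = 1 := by
  simp [genBinom]

theorem succ_mul_genBinom_succ (x : ℝ) (j : ℕ) :
    ((j : ℝ) + 1) * genBinom x (j + 1) = (x - j) * genBinom x j := by
  have : (j ! : ℝ) ≠ 0 := mod_cast j.factorial_ne_zero
  simp only [genBinom, prod_range_succ, Nat.factorial_succ]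
  push_cast
  field_simp

theorem succ_mul_genBinom_add_one_succ (x : ℝ) (j : ℕ) :
    ((j : ℝ) + 1) * genBinom (x + 1) (j + 1) = (x + 1) * genBinom x j := by
  have : (j ! : ℝ) ≠ 0 := mod_cast j.factorial_ne_zero
  have hshift : ∏ i ∈ range j, (x + 1 - ((i + 1 : ℕ) : ℝ)) = ∏ i ∈ range j, (x - i) :=
    prod_congr rfl fun i _ => by push_cast; ring
  simp only [genBinom, prod_range_succ', Nat.factorial_succ, hshift]
  push_cast
  field_simp
  ring

theorem genBinom_add_one_succ (x : ℝ) (j : ℕ) :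
    genBinom (x + 1) (j + 1) = genBinom x (j + 1) + genBinom x j := by
  refine mul_left_cancel₀ (by positivity : (j : ℝ) + 1 ≠ 0) ?_
  rw [succ_mul_genBinom_add_one_succ, mul_add, succ_mul_genBinom_succ]
  ring

def laguerre (n : ℕ) (α z : ℝ) : ℝ :=
  ∑ k ∈ range (n + 1), (-1 : ℝ) ^ k * genBinom (n + α) (n - k) * z ^ k / k !

theorem lagL_natCast_s9 (n : ℕ) (α : ℝ) : lagL n α = laguerre n α := by
  funext z
  simp [lagL, laguerre]

theorem continuous_laguerre (n : ℕ) (α : ℝ) : Continuous (laguerre n α) := by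
  unfold laguerre
  fun_prop

theorem hasDerivAt_laguerre (n : ℕ) (α z : ℝ) :
    HasDerivAt (laguerre n α) (∑ k ∈ range (n + 1),
      (-1 : ℝ) ^ k * genBinom (n + α) (n - k) * (k * z ^ (k - 1)) / k !) z := by
  have hfun : laguerre n α = fun y =>
      ∑ k ∈ range (n + 1), (-1 : ℝ) ^ k * genBinom (n + α) (n - k) / k ! * y ^ k :=
    funext fun y => sum_congr rfl fun k _ => by ring
  rw [hfun]
  exact (HasDerivAt.fun_sum fun k _ => (hasDerivAt_pow k z).const_mul _).congr_deriv
    (sum_congr rfl fun k _ => by ring)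

theorem deriv_laguerre (n : ℕ) (α z : ℝ) :
    deriv (laguerre n α) z =
      ∑ k ∈ range n, (-1 : ℝ) ^ (k + 1) * genBinom (n + α) (n - (k + 1)) * z ^ k / k ! := by
  rw [(hasDerivAt_laguerre n α z).deriv, sum_range_succ']
  simp only [CharP.cast_eq_zero, zero_mul, mul_zero, zero_div, add_zero]
  refine sum_congr rfl fun k _ => ?_
  have : (k ! : ℝ) ≠ 0 := mod_cast k.factorial_ne_zero
  rw [Nat.factorial_succ, Nat.add_sub_cancel]
  push_cast
  field_simp

theorem mul_deriv_laguerre_succ (n : ℕ) (α z : ℝ) :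
    z * deriv (laguerre (n + 1) α) z
      = (n + 1) * laguerre (n + 1) α z - (n + 1 + α) * laguerre n α z := by
  have hsum : z * ∑ k ∈ range (n + 2),
        (-1 : ℝ) ^ k * genBinom (((n + 1 : ℕ) : ℝ) + α) (n + 1 - k) * (k * z ^ (k - 1)) / k !
      =
      ∑ k ∈ range (n + 2),
        (-1 : ℝ) ^ k * genBinom (((n + 1 : ℕ) : ℝ) + α) (n + 1 - k) * (k * z ^ k) / k ! := by
    rw [mul_sum]
    refine sum_congr rfl fun k _ => ?_
    rcases k with _ | k
    · simp
    · rw [pow_succ]; push_cast; ring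
  rw [(hasDerivAt_laguerre (n + 1) α z).deriv, hsum, laguerre, laguerre, sum_range_succ,
    sum_range_succ (n := n + 1), mul_add, mul_sum, mul_sum, add_sub_right_comm, ← sum_sub_distrib]
  congr 1
  · refine sum_congr rfl fun k hk => ?_
    have hk : k ≤ n := Nat.lt_succ_iff.mp (mem_range.mp hk)
    have h := succ_mul_genBinom_add_one_succ ((n : ℝ) + α) (n - k)
    rw [Nat.cast_sub hk] at h
    rw [show n + 1 - k = n - k + 1 by omega]
    push_cast at h ⊢
    rw [add_right_comm] at h
    linear_combination (-((-1 : ℝ) ^ k * z ^ k / k !)) * h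
  · push_cast
    ring

theorem deriv_laguerre_succ (n : ℕ) (α z : ℝ) :
    deriv (laguerre (n + 1) α) z = deriv (laguerre n α) z - laguerre n α z := by
  rw [deriv_laguerre, deriv_laguerre, laguerre, sum_range_succ, sum_range_succ _ n, ← sub_sub,
    ← sum_sub_distrib]
  congr 1
  · refine sum_congr rfl fun k hk => ?_
    have hk : k < n := mem_range.mp hk
    rw [show n + 1 - (k + 1) = n - (k + 1) + 1 by omega, show n - k = n - (k + 1) + 1 by omega]
    push_cast
    rw [add_right_comm, genBinom_add_one_succ]
    ring
  · simp only [Nat.sub_self, genBinom_zero]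
    ring

theorem hasDerivAt_laguerre_succ_div (n : ℕ) (α : ℝ) {z : ℝ} (hz : z ≠ 0)
    (hL : laguerre n α z ≠ 0) :
    HasDerivAt (fun t => laguerre (n + 1) α t / laguerre n α t)
      ((-(n + 1) * (laguerre (n + 1) α z / laguerre n α z) ^ 2 +
        (n + 1 + (n + 1 + α) - z) * (laguerre (n + 1) α z / laguerre n α z) - (n + 1 + α)) / z)
      z := by
  refine ((hasDerivAt_laguerre (n + 1) α z).differentiableAt.hasDerivAt.fun_div
    (hasDerivAt_laguerre n α z).differentiableAt.hasDerivAt hL).congr_deriv ?_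
  have hA := mul_deriv_laguerre_succ n α z
  have hB : z * deriv (laguerre n α) z
      = (n + 1) * laguerre (n + 1) α z - (n + 1 + α - z) * laguerre n α z := by
    linear_combination hA - z * deriv_laguerre_succ n α z
  field_simp
  linear_combination laguerre n α z * hA - laguerre (n + 1) α z * hB

theorem pv_rational_solution_n_zero_general (m : ℕ) (μ : ℝ) (w : ℝ → ℝ)
    (hw : w = fun z => lagL (m : ℤ) (μ + 1) z / lagL ((m : ℤ) - 1) (μ + 1) z) :
    ∀ z : ℝ, z ≠ 0 → lagL ((m : ℤ) - 1) (μ + 1) z ≠ 0 → w z ≠ 0 → w z ≠ 1 →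
      PV ((m : ℝ) ^ 2 / 2) (-((m : ℝ) + 1 + μ) ^ 2 / 2) μ w z := by
  intro z hz hL hw0 hw1
  obtain _ | n := m
  · simp [lagL] at hL
  have hpred : ((n + 1 : ℕ) : ℤ) - 1 = n := by push_cast; ring
  rw [hpred, lagL_natCast_s9] at hL
  rw [hpred, lagL_natCast_s9, lagL_natCast_s9] at hw
  subst hw
  have hric := (eventually_ne_nhds hz).and
    ((continuous_laguerre n (μ + 1)).continuousAt.eventually_ne hL)
  convert pv_of_riccati hz hw0 hw1
    (hric.mono fun t ht => hasDerivAt_laguerre_succ_div n (μ + 1) ht.1 ht.2) using 2 <;>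
    push_cast <;> ring

/-- the `n = 0` rational solution of `P_V`. -/
theorem pv_rational_solution_n_zero (m : ℕ) (hm : 1 ≤ m) (μ : ℝ) (w : ℝ → ℝ)
    (hw : w = fun z => lagL (m : ℤ) (μ + 1) z / lagL ((m : ℤ) - 1) (μ + 1) z) :
    ∀ z : ℝ, z ≠ 0 → lagL ((m : ℤ) - 1) (μ + 1) z ≠ 0 → w z ≠ 0 → w z ≠ 1 →
      PV ((m : ℝ) ^ 2 / 2) (-((m : ℝ) + 1 + μ) ^ 2 / 2) μ w z :=
  pv_rational_solution_n_zero_general m μ w hw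
end
end
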